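/- arXiv:1001.0784 — 2 statements merged into one kernel-verified Lean document; each statement's English description precedes it below -/
import Mathlib

section
/- Let q : ℕ → ℝ be a nondecreasing sequence on {1,...,N_H}, and let P : {1,...,N_H} → ℝ satisfy 0 ≤ P(m) ≤ 1 for all m and ∑_{m=1}^{N_H} P(m) = N for some natural number N ≤ N_H. Then ∑_{m=1}^{N_H} q_m P(m) ≥ ∑_{m=1}^{N} q_m. -/
open Finset

lemma card_filter_lt_fin (NH N : ℕ) (hN : N ≤ NH) :
    (Finset.univ.filter (fun m : Fin NH => (m : ℕ) < N)).card = N := by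
  have : (Finset.univ.filter (fun m : Fin NH => (m : ℕ) < N)) =
      (Finset.range N).attachFin (fun m hm => lt_of_lt_of_le (Finset.mem_range.mp hm) hN) := by
    ext m
    simp [Finset.mem_attachFin]
  rw [this, Finset.card_attachFin, Finset.card_range]

/-- Rearrangement core of the Ky Fan inequality: if `q` is nondecreasing and the weights
`P m ∈ [0,1]` sum to `N ≤ NH`, then `∑ q m * P m ≥ ∑_{m<N} q m`. -/
theorem weighted_sum_ge_smallest (NH N : ℕ) (hN : N ≤ NH)
    (q : Fin NH → ℝ) (hq : Monotone q)
    (P : Fin NH → ℝ) (hP0 : ∀ m, 0 ≤ P m) (hP1 : ∀ m, P m ≤ 1)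
    (hPsum : ∑ m, P m = (N : ℝ)) :
    ∑ m, q m * P m ≥ ∑ m ∈ Finset.univ.filter (fun m : Fin NH => (m : ℕ) < N), q m := by
  set I : Fin NH → ℝ := fun m => if (m : ℕ) < N then 1 else 0 with hI
  have hIsum : ∑ m, I m = (N : ℝ) := by
    rw [hI]
    simp only [Finset.sum_ite, Finset.sum_const, Finset.sum_const_zero, add_zero, nsmul_eq_mul, mul_one]
    rw [card_filter_lt_fin NH N hN]; ring
  have hfilter : ∑ m ∈ Finset.univ.filter (fun m : Fin NH => (m : ℕ) < N), q m
      = ∑ m, q m * I m := by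
    rw [Finset.sum_filter]
    congr 1
    ext m
    by_cases h : (m : ℕ) < N <;> simp [hI, h]
  rcases eq_or_lt_of_le hN with rfl | hlt
  · -- N = NH : all P m = 1
    have hall : ∀ m, P m = 1 := by
      by_contra h
      push_neg at h
      obtain ⟨m0, hm0⟩ := h
      have hm0' : P m0 < 1 := lt_of_le_of_ne (hP1 m0) hm0
      have : ∑ m, P m < ∑ m : Fin N, (1 : ℝ) := by
        apply Finset.sum_lt_sum (fun i _ => hP1 i) ⟨m0, Finset.mem_univ m0, hm0'⟩
      simp [hPsum] at this
    rw [hfilter]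
    apply le_of_eq
    apply Finset.sum_congr rfl
    intro m _
    have : I m = 1 := by simp [hI, m.isLt]
    rw [this, hall m]
  · -- N < NH
    set c : ℝ := q ⟨N, hlt⟩ with hc
    have key : ∀ m : Fin NH, 0 ≤ (q m - c) * (P m - I m) := by
      intro m
      by_cases h : (m : ℕ) < N
      · have h1 : q m ≤ c := hq (by simpa [Fin.le_def] using h.le)
        have h2 : P m - I m ≤ 0 := by simp [hI, h]; linarith [hP1 m]
        nlinarith [h1, h2]
      · have h1 : c ≤ q m := hq (by simpa [Fin.le_def] using Nat.le_of_not_lt h)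
        have h2 : 0 ≤ P m - I m := by simp [hI, h]; exact hP0 m
        exact mul_nonneg (by linarith) h2
    have hsum : 0 ≤ ∑ m, (q m - c) * (P m - I m) :=
      Finset.sum_nonneg fun m _ => key m
    have expand : ∑ m, (q m - c) * (P m - I m)
        = ∑ m, q m * P m - ∑ m, q m * I m - c * (∑ m, P m - ∑ m, I m) := by
      simp only [sub_mul, mul_sub]
      rw [Finset.sum_sub_distrib, Finset.sum_sub_distrib, Finset.sum_sub_distrib,
        Finset.mul_sum, Finset.mul_sum]
      ring
    rw [hPsum, hIsum, sub_self, mul_zero, sub_zero] at expand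
    rw [hfilter]
    linarith [hsum.trans_eq expand]
end

section
/- Let f, g : (0, λ₀] → ℝ be nonnegative functions such that ∫_0^Λ f(λ) dλ ≥ ∫_0^Λ g(λ) dλ for all Λ ∈ (0, λ₀]. Suppose f(λ) ~ a λ^r and g(λ) ~ b λ^q as λ → 0⁺ with a, b > 0. Then either r < q, or r = q and a ≥ b. -/
/-!
Integrating the asymptotics gives `∫₀^Λ f ~ a Λ^(r+1) / (r+1)` and `∫₀^Λ g ~ b Λ^(q+1) / (q+1)`,
where integrability of `f` and `g` near `0` forces `r, q > -1`. The inequality between the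
integrals then rules out `q < r`, since `∫₀^Λ g` would dominate `∫₀^Λ f` as `Λ → 0⁺`, and for
`q = r` passes to the limit as `b / (r+1) ≤ a / (r+1)`.
-/

open Filter Set intervalIntegral MeasureTheory Topology

lemma exists_Ioc_abs_sub_mul_rpow_le {f : ℝ → ℝ} {a r ε : ℝ}
    (hfa : Tendsto (fun x => f x / x ^ r) (𝓝[>] 0) (𝓝 a)) (hε : 0 < ε) :
    ∃ δ > 0, ∀ x ∈ Ioc 0 δ, |f x - a * x ^ r| ≤ ε * x ^ r := by
  obtain ⟨δ, hδ, hsub⟩ := mem_nhdsGT_iff_exists_Ioc_subset.mp (Metric.tendsto_nhds.mp hfa ε hε)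
  refine ⟨δ, hδ, fun x hx => ?_⟩
  have hxr : 0 < x ^ r := Real.rpow_pos_of_pos hx.1 r
  have hclose : |f x / x ^ r - a| < ε := hsub hx
  calc |f x - a * x ^ r| = |f x / x ^ r - a| * x ^ r := by
        rw [← abs_of_pos hxr, ← abs_mul, abs_of_pos hxr, sub_mul, div_mul_cancel₀ _ hxr.ne']
    _ ≤ ε * x ^ r := by gcongr

lemma integral_rpow_of_neg_one_lt {r : ℝ} (hr : -1 < r) (Λ : ℝ) :
    ∫ x in (0)..Λ, x ^ r = Λ ^ (r + 1) / (r + 1) := by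
  rw [integral_rpow (Or.inl hr), Real.zero_rpow (by linarith), sub_zero]

lemma neg_one_lt_of_tendsto_div_rpow {f : ℝ → ℝ} {a r δ : ℝ} (hδ : 0 < δ)
    (hf : IntegrableOn f (Ioc 0 δ)) (ha : 0 < a)
    (hfa : Tendsto (fun x => f x / x ^ r) (𝓝[>] 0) (𝓝 a)) : -1 < r := by
  obtain ⟨δ', hδ', hclose⟩ := exists_Ioc_abs_sub_mul_rpow_le hfa (half_pos ha)
  set η := min δ δ'
  have hη : 0 < η := lt_min hδ hδ'
  have hdom : ∀ x ∈ Ioc 0 η, ‖x ^ r‖ ≤ 2 / a * f x := fun x hx => by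
    have hxr : 0 < x ^ r := Real.rpow_pos_of_pos hx.1 r
    have := (abs_le.mp (hclose x ⟨hx.1, hx.2.trans (min_le_right _ _)⟩)).1
    rw [Real.norm_of_nonneg hxr.le, div_mul_eq_mul_div, le_div_iff₀ ha]
    linarith
  have hint : IntegrableOn (fun x : ℝ => x ^ r) (Ioc 0 η) := by
    refine ((hf.mono_set (Ioc_subset_Ioc_right (min_le_left _ _))).const_mul (2 / a)).mono' ?_
      ((ae_restrict_iff' measurableSet_Ioc).mpr (.of_forall hdom))
    exact (continuousOn_id.rpow_const fun x hx => Or.inl hx.1.ne').aestronglyMeasurable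
      measurableSet_Ioc
  exact (integrableOn_Ioo_rpow_iff hη).mp (hint.mono_set Ioo_subset_Ioc_self)

lemma tendsto_integral_div_rpow {f : ℝ → ℝ} {a r δ : ℝ} (hr : -1 < r) (hδ : 0 < δ)
    (hf : IntervalIntegrable f volume 0 δ)
    (hfa : Tendsto (fun x => f x / x ^ r) (𝓝[>] 0) (𝓝 a)) :
    Tendsto (fun Λ => (∫ x in (0)..Λ, f x) / Λ ^ (r + 1)) (𝓝[>] 0) (𝓝 (a / (r + 1))) := by
  have hr1 : 0 < r + 1 := by linarith
  refine Metric.tendsto_nhds.mpr fun ε hε => ?_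
  obtain ⟨δ', hδ', hclose⟩ := exists_Ioc_abs_sub_mul_rpow_le hfa (half_pos (mul_pos hε hr1))
  filter_upwards [Ioc_mem_nhdsGT (lt_min hδ hδ')] with Λ ⟨hΛ0, hΛδ⟩
  have hpow : 0 < Λ ^ (r + 1) := Real.rpow_pos_of_pos hΛ0 _
  have hfΛ : IntervalIntegrable f volume 0 Λ :=
    hf.mono_set (uIcc_subset_uIcc_left (by simp [uIcc_of_le hδ.le, hΛ0.le, hΛδ.trans (min_le_left _ _)]))
  have hrpow (c : ℝ) : IntervalIntegrable (fun x => c * x ^ r) volume 0 Λ :=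
    (intervalIntegrable_rpow' hr).const_mul c
  have herr : |(∫ x in (0)..Λ, f x) - a * (Λ ^ (r + 1) / (r + 1))|
      ≤ ε * (r + 1) / 2 * (Λ ^ (r + 1) / (r + 1)) := by
    rw [← integral_rpow_of_neg_one_lt hr, ← intervalIntegral.integral_const_mul,
      ← intervalIntegral.integral_const_mul,
      ← integral_sub hfΛ (hrpow a), ← Real.norm_eq_abs]
    exact norm_integral_le_of_norm_le hΛ0.le
      (.of_forall fun x hx => hclose x ⟨hx.1, hx.2.trans (hΛδ.trans (min_le_right _ _))⟩) (hrpow _)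
  rw [Real.dist_eq]
  calc |(∫ x in (0)..Λ, f x) / Λ ^ (r + 1) - a / (r + 1)|
        = |(∫ x in (0)..Λ, f x) - a * (Λ ^ (r + 1) / (r + 1))| / Λ ^ (r + 1) := by
        rw [← abs_of_pos hpow, ← abs_div, abs_of_pos hpow]
        congr 1
        field_simp
    _ ≤ ε / 2 := by
        rw [div_le_iff₀ hpow]
        refine herr.trans_eq ?_
        field_simp
    _ < ε := half_lt_self hε

lemma lt_or_eq_and_le_of_tendsto_div_rpow {F G : ℝ → ℝ} {A B s t : ℝ} (hB : 0 < B)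
    (hF : Tendsto (fun x => F x / x ^ s) (𝓝[>] 0) (𝓝 A))
    (hG : Tendsto (fun x => G x / x ^ t) (𝓝[>] 0) (𝓝 B))
    (hGF : G ≤ᶠ[𝓝[>] 0] F) : s < t ∨ (s = t ∧ B ≤ A) := by
  rcases lt_trichotomy s t with hst | rfl | hts
  · exact .inl hst
  · refine .inr ⟨rfl, le_of_tendsto_of_tendsto hG hF ?_⟩
    filter_upwards [hGF, self_mem_nhdsWithin] with x hx (hx0 : 0 < x)
    exact div_le_div_of_nonneg_right hx (Real.rpow_pos_of_pos hx0 s).le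
  · have hpow : Tendsto (fun x : ℝ => x ^ (s - t)) (𝓝[>] 0) (𝓝 0) := by
      simpa [Real.zero_rpow (sub_pos.mpr hts).ne'] using
        ((Real.continuousAt_rpow_const 0 (s - t) (.inr (sub_pos.mpr hts).le)).tendsto).mono_left
          nhdsWithin_le_nhds
    have hlim : Tendsto (fun x => F x / x ^ s * x ^ (s - t)) (𝓝[>] 0) (𝓝 0) := by
      simpa using hF.mul hpow
    have hB0 : B ≤ 0 := by
      refine le_of_tendsto_of_tendsto hG hlim ?_
      filter_upwards [hGF, self_mem_nhdsWithin] with x hx (hx0 : 0 < x)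
      have hxs : 0 < x ^ s := Real.rpow_pos_of_pos hx0 s
      have hxt : 0 < x ^ t := Real.rpow_pos_of_pos hx0 t
      rw [Real.rpow_sub hx0, div_mul_div_cancel₀ hxs.ne']
      exact div_le_div_of_nonneg_right hx hxt.le
    exact absurd hB0 hB.not_ge

theorem asymptotic_comparison_general (lam0 : ℝ) (hlam0 : 0 < lam0)
    (f g : ℝ → ℝ)
    (hfint : ∀ Λ ∈ Set.Ioc (0 : ℝ) lam0, IntervalIntegrable f MeasureTheory.volume 0 Λ)
    (hgint : ∀ Λ ∈ Set.Ioc (0 : ℝ) lam0, IntervalIntegrable g MeasureTheory.volume 0 Λ)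
    (hint : ∀ Λ ∈ Set.Ioc (0 : ℝ) lam0, (∫ l in (0)..Λ, g l) ≤ ∫ l in (0)..Λ, f l)
    (a b r q : ℝ) (ha : 0 < a) (hb : 0 < b)
    (hfa : Tendsto (fun l => f l / l ^ r) (nhdsWithin 0 (Set.Ioi 0)) (nhds a))
    (hgb : Tendsto (fun l => g l / l ^ q) (nhdsWithin 0 (Set.Ioi 0)) (nhds b)) :
    r < q ∨ (r = q ∧ b ≤ a) := by
  have hf := hfint lam0 ⟨hlam0, le_rfl⟩
  have hg := hgint lam0 ⟨hlam0, le_rfl⟩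
  have hr : -1 < r := neg_one_lt_of_tendsto_div_rpow hlam0 hf.1 ha hfa
  have hq : -1 < q := neg_one_lt_of_tendsto_div_rpow hlam0 hg.1 hb hgb
  have hGF : (fun Λ => ∫ l in (0)..Λ, g l) ≤ᶠ[𝓝[>] 0] fun Λ => ∫ l in (0)..Λ, f l :=
    eventually_of_mem (Ioc_mem_nhdsGT hlam0) hint
  rcases lt_or_eq_and_le_of_tendsto_div_rpow (div_pos hb (by linarith))
      (tendsto_integral_div_rpow hr hlam0 hf hfa) (tendsto_integral_div_rpow hq hlam0 hg hgb) hGF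
    with hlt | ⟨heq, hle⟩
  · exact .inl (by linarith)
  · obtain rfl : r = q := by linarith
    exact .inr ⟨rfl, (div_le_div_iff_of_pos_right (by linarith)).mp hle⟩

/-- Asymptotic comparison: if `f, g ≥ 0` on `(0, lam0]`, `∫_0^Λ f ≥ ∫_0^Λ g` for every
`Λ ∈ (0, lam0]`, and `f(λ) ~ a λ^r`, `g(λ) ~ b λ^q` as `λ → 0⁺` with `a, b > 0`, then
either `r < q`, or `r = q` and `a ≥ b`. -/
theorem asymptotic_comparison (lam0 : ℝ) (hlam0 : 0 < lam0)
    (f g : ℝ → ℝ)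
    (hf0 : ∀ l ∈ Set.Ioc (0 : ℝ) lam0, 0 ≤ f l)
    (hg0 : ∀ l ∈ Set.Ioc (0 : ℝ) lam0, 0 ≤ g l)
    (hfint : ∀ Λ ∈ Set.Ioc (0 : ℝ) lam0, IntervalIntegrable f MeasureTheory.volume 0 Λ)
    (hgint : ∀ Λ ∈ Set.Ioc (0 : ℝ) lam0, IntervalIntegrable g MeasureTheory.volume 0 Λ)
    (hint : ∀ Λ ∈ Set.Ioc (0 : ℝ) lam0, (∫ l in (0)..Λ, g l) ≤ ∫ l in (0)..Λ, f l)
    (a b r q : ℝ) (ha : 0 < a) (hb : 0 < b)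
    (hfa : Tendsto (fun l => f l / l ^ r) (nhdsWithin 0 (Set.Ioi 0)) (nhds a))
    (hgb : Tendsto (fun l => g l / l ^ q) (nhdsWithin 0 (Set.Ioi 0)) (nhds b)) :
    r < q ∨ (r = q ∧ b ≤ a) :=
  asymptotic_comparison_general lam0 hlam0 f g hfint hgint hint a b r q ha hb hfa hgb
end
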